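/- If F satisfies 1+θ₀ ≤ t·F'(t)/F(t) ≤ 1+f₀ for all t > 0 with f := F', then ((1+θ₀)/(1+f₀))·min{s^{θ₀}, s^{f₀}}·f(t) ≤ f(s·t) ≤ ((1+f₀)/(1+θ₀))·max{s^{θ₀}, s^{f₀}}·f(t) for all s, t > 0. -/

import Mathlib

/-!
The two-sided bound on `t F'(t) / F(t)` says exactly that `F(u) / u^(1+θ₀)` is nondecreasing and
`F(u) / u^(1+f₀)` is nonincreasing on `(0, ∞)`. Comparing these quotients at `t` and `s t` pins
`F(s t)` between `min` and `max` of `s^(1+θ₀) F(t)` and `s^(1+f₀) F(t)`, and the same bound on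
`t F'(t) / F(t)`, used once at `t` and once at `s t`, transfers this to `F'`.
-/

open Set Real

section PowerQuotient

variable {F : ℝ → ℝ} {c : ℝ}

theorem hasDerivAt_div_rpow {u : ℝ} (hu : 0 < u) (hF : DifferentiableAt ℝ F u) :
    HasDerivAt (fun u => F u / u ^ c) ((u * deriv F u - c * F u) / (u * u ^ c)) u := by
  have := rpow_pos_of_pos hu c
  refine (hF.hasDerivAt.div (hasDerivAt_rpow_const (Or.inl hu.ne')) this.ne').congr_deriv ?_
  rw [rpow_sub_one hu.ne']
  field_simp

theorem monotoneOn_div_rpow (hF : DifferentiableOn ℝ F (Ioi 0))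
    (h : ∀ u, 0 < u → c * F u ≤ u * deriv F u) :
    MonotoneOn (fun u => F u / u ^ c) (Ioi 0) := by
  have hderiv (u : ℝ) (hu : 0 < u) :=
    hasDerivAt_div_rpow (c := c) hu (hF.differentiableAt (Ioi_mem_nhds hu))
  refine monotoneOn_of_hasDerivWithinAt_nonneg (convex_Ioi 0)
    (fun u hu => (hderiv u hu).continuousAt.continuousWithinAt)
    (fun u hu => (hderiv u (interior_subset hu)).hasDerivWithinAt) fun u hu => ?_
  have hu : 0 < u := interior_subset hu
  exact div_nonneg (sub_nonneg.2 (h u hu)) (mul_pos hu (rpow_pos_of_pos hu c)).le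

theorem antitoneOn_div_rpow (hF : DifferentiableOn ℝ F (Ioi 0))
    (h : ∀ u, 0 < u → u * deriv F u ≤ c * F u) :
    AntitoneOn (fun u => F u / u ^ c) (Ioi 0) := by
  have hderiv (u : ℝ) (hu : 0 < u) :=
    hasDerivAt_div_rpow (c := c) hu (hF.differentiableAt (Ioi_mem_nhds hu))
  refine antitoneOn_of_hasDerivWithinAt_nonpos (convex_Ioi 0)
    (fun u hu => (hderiv u hu).continuousAt.continuousWithinAt)
    (fun u hu => (hderiv u (interior_subset hu)).hasDerivWithinAt) fun u hu => ?_
  have hu : 0 < u := interior_subset hu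
  exact div_nonpos_of_nonpos_of_nonneg (sub_nonpos.2 (h u hu))
    (mul_pos hu (rpow_pos_of_pos hu c)).le

theorem div_rpow_mul_eq {s t : ℝ} (hs : 0 < s) (ht : 0 < t) :
    F (s * t) / (s * t) ^ c = F (s * t) / s ^ c / t ^ c := by
  rw [mul_rpow hs.le ht.le, div_div]

theorem div_rpow_le_div_rpow_mul_iff {s t : ℝ} (hs : 0 < s) (ht : 0 < t) :
    F t / t ^ c ≤ F (s * t) / (s * t) ^ c ↔ s ^ c * F t ≤ F (s * t) := by
  rw [div_rpow_mul_eq hs ht, div_le_div_iff_of_pos_right (rpow_pos_of_pos ht c),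
    le_div_iff₀ (rpow_pos_of_pos hs c), mul_comm]

theorem div_rpow_mul_le_div_rpow_iff {s t : ℝ} (hs : 0 < s) (ht : 0 < t) :
    F (s * t) / (s * t) ^ c ≤ F t / t ^ c ↔ F (s * t) ≤ s ^ c * F t := by
  rw [div_rpow_mul_eq hs ht, div_le_div_iff_of_pos_right (rpow_pos_of_pos ht c),
    div_le_iff₀ (rpow_pos_of_pos hs c), mul_comm (s ^ c)]

theorem min_rpow_mul_le_and_le_max_rpow_mul {c₁ c₂ : ℝ} (hc : c₁ ≤ c₂)
    (hmono : MonotoneOn (fun u => F u / u ^ c₁) (Ioi 0))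
    (hanti : AntitoneOn (fun u => F u / u ^ c₂) (Ioi 0)) {s t : ℝ} (hs : 0 < s) (ht : 0 < t) :
    min (s ^ c₁) (s ^ c₂) * F t ≤ F (s * t) ∧ F (s * t) ≤ max (s ^ c₁) (s ^ c₂) * F t := by
  have hst : s * t ∈ Ioi 0 := mul_pos hs ht
  rcases le_total 1 s with hs1 | hs1
  · have hle : t ≤ s * t := le_mul_of_one_le_left ht.le hs1
    have hpow := rpow_le_rpow_of_exponent_le hs1 hc
    rw [min_eq_left hpow, max_eq_right hpow]
    exact ⟨(div_rpow_le_div_rpow_mul_iff hs ht).1 (hmono ht hst hle),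
      (div_rpow_mul_le_div_rpow_iff hs ht).1 (hanti ht hst hle)⟩
  · have hle : s * t ≤ t := mul_le_of_le_one_left ht.le hs1
    have hpow := rpow_le_rpow_of_exponent_ge hs hs1 hc
    rw [min_eq_right hpow, max_eq_left hpow]
    exact ⟨(div_rpow_le_div_rpow_mul_iff hs ht).1 (hanti hst ht hle),
      (div_rpow_mul_le_div_rpow_iff hs ht).1 (hmono hst ht hle)⟩

end PowerQuotient

section DerivativeBounds

variable {F f : ℝ → ℝ} {c₁ c₂ s t m : ℝ}

theorem div_mul_mul_le_apply_mul (hc₁ : 0 ≤ c₁) (hc₂ : 0 < c₂) (hs : 0 < s) (ht : 0 < t)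
    (hm : 0 ≤ m) (hlow : c₁ * F (s * t) ≤ s * t * f (s * t)) (hupp : t * f t ≤ c₂ * F t)
    (hF : s * m * F t ≤ F (s * t)) :
    c₁ / c₂ * m * f t ≤ f (s * t) := by
  have hst : 0 < s * t := mul_pos hs ht
  refine le_of_mul_le_mul_right ?_ hst
  calc c₁ / c₂ * m * f t * (s * t) = c₁ * m * s * (t * f t) / c₂ := by ring
    _ ≤ c₁ * m * s * (c₂ * F t) / c₂ := by gcongr
    _ = c₁ * (s * m * F t) := by field_simp
    _ ≤ c₁ * F (s * t) := by gcongr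
    _ ≤ f (s * t) * (s * t) := by linarith

theorem apply_mul_le_div_mul_mul (hc₁ : 0 < c₁) (hc₂ : 0 ≤ c₂) (hs : 0 < s) (ht : 0 < t)
    (hm : 0 ≤ m) (hupp : s * t * f (s * t) ≤ c₂ * F (s * t)) (hlow : c₁ * F t ≤ t * f t)
    (hF : F (s * t) ≤ s * m * F t) :
    f (s * t) ≤ c₂ / c₁ * m * f t := by
  have hst : 0 < s * t := mul_pos hs ht
  refine le_of_mul_le_mul_right ?_ hst
  calc f (s * t) * (s * t) ≤ c₂ * F (s * t) := by linarith
    _ ≤ c₂ * (s * m * F t) := by gcongr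
    _ = c₂ * m * s * (c₁ * F t) / c₁ := by field_simp
    _ ≤ c₂ * m * s * (t * f t) / c₁ := by gcongr
    _ = c₂ / c₁ * m * f t * (s * t) := by ring

end DerivativeBounds

theorem stmt_7_general (F f : ℝ → ℝ) (θ₀ f₀ : ℝ)
    (hθ : 0 < 1 + θ₀) (hθf : 1 + θ₀ ≤ 1 + f₀)
    (hC1 : ContDiffOn ℝ 1 F (Set.Ioi 0))
    (hpos : ∀ t : ℝ, 0 < t → 0 < F t)
    (hf : ∀ t : ℝ, 0 < t → f t = deriv F t)
    (hlieb : ∀ t : ℝ, 0 < t →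
      1 + θ₀ ≤ t * f t / F t ∧ t * f t / F t ≤ 1 + f₀) :
    ∀ s t : ℝ, 0 < s → 0 < t →
      (1 + θ₀) / (1 + f₀) * min (s ^ θ₀) (s ^ f₀) * f t ≤ f (s * t) ∧
      f (s * t) ≤ (1 + f₀) / (1 + θ₀) * max (s ^ θ₀) (s ^ f₀) * f t := by
  intro s t hs ht
  have hlow u (hu : 0 < u) : (1 + θ₀) * F u ≤ u * f u :=
    (le_div_iff₀ (hpos u hu)).1 (hlieb u hu).1
  have hupp u (hu : 0 < u) : u * f u ≤ (1 + f₀) * F u :=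
    (div_le_iff₀ (hpos u hu)).1 (hlieb u hu).2
  have hF := hC1.differentiableOn one_ne_zero
  have hmono := monotoneOn_div_rpow hF fun u hu => hf u hu ▸ hlow u hu
  have hanti := antitoneOn_div_rpow hF fun u hu => hf u hu ▸ hupp u hu
  obtain ⟨hFlow, hFupp⟩ := min_rpow_mul_le_and_le_max_rpow_mul hθf hmono hanti hs ht
  simp only [rpow_add hs, rpow_one, ← mul_min_of_nonneg _ _ hs.le,
    ← mul_max_of_nonneg _ _ hs.le] at hFlow hFupp
  exact ⟨div_mul_mul_le_apply_mul hθ.le (hθ.trans_le hθf) hs ht (by positivity)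
      (hlow _ (mul_pos hs ht)) (hupp t ht) hFlow,
    apply_mul_le_div_mul_mul hθ (hθ.trans_le hθf).le hs ht (by positivity)
      (hupp _ (mul_pos hs ht)) (hlow t ht) hFupp⟩

theorem stmt_7 (F f : ℝ → ℝ) (θ₀ f₀ : ℝ)
    (hθ : 0 < 1 + θ₀) (hθf : 1 + θ₀ ≤ 1 + f₀)
    (hcont : ContinuousOn F (Set.Ici 0))
    (hC1 : ContDiffOn ℝ 1 F (Set.Ioi 0))
    (hF0 : F 0 = 0)
    (hpos : ∀ t : ℝ, 0 < t → 0 < F t)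
    (hf : ∀ t : ℝ, 0 < t → f t = deriv F t)
    (hlieb : ∀ t : ℝ, 0 < t →
      1 + θ₀ ≤ t * f t / F t ∧ t * f t / F t ≤ 1 + f₀) :
    ∀ s t : ℝ, 0 < s → 0 < t →
      (1 + θ₀) / (1 + f₀) * min (s ^ θ₀) (s ^ f₀) * f t ≤ f (s * t) ∧
      f (s * t) ≤ (1 + f₀) / (1 + θ₀) * max (s ^ θ₀) (s ^ f₀) * f t :=
  stmt_7_general F f θ₀ f₀ hθ hθf hC1 hpos hf hlieb
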